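/- arXiv:2511.02978 — 6 statements merged into one kernel-verified Lean document; each statement's English description precedes it below -/
import Mathlib

section
/- For all real vectors t₁, t₂ ∈ ℝ^N, not both zero, and 1 < p ≤ 2, there exists a constant C > 0 (depending only on p) such that ⟨|t₁|^{p-2} t₁ - |t₂|^{p-2} t₂, t₁ - t₂⟩ ≥ C |t₁ - t₂|² / (|t₁| + |t₂|)^{2-p}. -/
/-!
Take `C = p - 1` and write `a = ‖t₁‖`, `b = ‖t₂‖`, `c = ⟪t₁, t₂⟫`. Both sides of the inequality,
multiplied by `(a + b) ^ (2 - p)`, are affine in `c`, and `c` ranges over `[-a b, a b]`, so it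
suffices to check the two endpoints. At `c = -a b` the inequality reduces to the subadditivity of
`t ↦ t ^ (p - 1)`; at `c = a b`, for `b ≤ a`, to the tangent-line bound
`a ^ (p - 1) - b ^ (p - 1) ≥ (p - 1) a ^ (p - 2) (a - b)` of this concave function, together with
`(a + b) ^ (p - 2) ≤ a ^ (p - 2)`.
-/

open Real

lemma mul_rpow_sub_one_mul_sub_le_rpow_sub_rpow {a b q : ℝ} (hb : 0 ≤ b) (hba : b ≤ a)
    (hq0 : 0 ≤ q) (hq1 : q ≤ 1) : q * a ^ (q - 1) * (a - b) ≤ a ^ q - b ^ q := by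
  rcases (hb.trans hba).eq_or_lt with rfl | ha
  · rw [le_antisymm hba hb]; simp
  have bernoulli := rpow_one_add_le_one_add_mul_self (s := b / a - 1)
    (by linarith [div_nonneg hb ha.le]) hq0 hq1
  rw [add_sub_cancel, div_rpow hb ha.le, div_le_iff₀ (rpow_pos_of_pos ha q)] at bernoulli
  have tangent : (1 + q * (b / a - 1)) * a ^ q = a ^ q - q * a ^ (q - 1) * (a - b) := by
    rw [rpow_sub_one ha.ne']
    field_simp
    ring
  linarith

lemma sub_one_mul_add_rpow_le_add_rpow {a b p : ℝ} (ha : 0 ≤ a) (hb : 0 ≤ b)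
    (hp1 : 1 ≤ p) (hp2 : p ≤ 2) :
    (p - 1) * (a + b) ^ (p - 1) ≤ a ^ (p - 1) + b ^ (p - 1) :=
  calc (p - 1) * (a + b) ^ (p - 1) ≤ (a + b) ^ (p - 1) :=
        mul_le_of_le_one_left (by positivity) (by linarith)
    _ ≤ a ^ (p - 1) + b ^ (p - 1) := rpow_add_le_add_rpow ha hb (by linarith) (by linarith)

lemma sub_one_mul_rpow_mul_sub_le_rpow_sub_rpow {a b p : ℝ} (hb : 0 ≤ b) (hba : b ≤ a)
    (hp1 : 1 ≤ p) (hp2 : p ≤ 2) :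
    (p - 1) * (a + b) ^ (p - 2) * (a - b) ≤ a ^ (p - 1) - b ^ (p - 1) := by
  rcases (hb.trans hba).eq_or_lt with rfl | ha
  · rw [le_antisymm hba hb]; simp
  calc (p - 1) * (a + b) ^ (p - 2) * (a - b) ≤ (p - 1) * a ^ (p - 2) * (a - b) := by
        have hmono : (a + b) ^ (p - 2) ≤ a ^ (p - 2) :=
          rpow_le_rpow_of_nonpos ha (by linarith) (by linarith)
        gcongr
    _ = (p - 1) * a ^ (p - 1 - 1) * (a - b) := by ring_nf
    _ ≤ a ^ (p - 1) - b ^ (p - 1) :=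
        mul_rpow_sub_one_mul_sub_le_rpow_sub_rpow hb hba (by linarith) (by linarith)

lemma sub_one_mul_add_rpow_mul_sq_le_rpow_sub_rpow_mul {a b p : ℝ} (ha : 0 ≤ a) (hb : 0 ≤ b)
    (hp1 : 1 ≤ p) (hp2 : p ≤ 2) :
    (p - 1) * (a + b) ^ (p - 2) * (a - b) ^ 2 ≤ (a ^ (p - 1) - b ^ (p - 1)) * (a - b) := by
  rcases le_total b a with hba | hab
  · have := sub_one_mul_rpow_mul_sub_le_rpow_sub_rpow hb hba hp1 hp2
    nlinarith [sub_nonneg.mpr hba]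
  · have := sub_one_mul_rpow_mul_sub_le_rpow_sub_rpow ha hab hp1 hp2
    rw [add_comm] at this
    nlinarith [sub_nonneg.mpr hab]

lemma add_mul_nonneg_of_abs_le {a b c m : ℝ} (hneg : 0 ≤ a - b * m) (hpos : 0 ≤ a + b * m)
    (hc : |c| ≤ m) : 0 ≤ a + b * c := by
  obtain ⟨hmc, hcm⟩ := abs_le.mp hc
  rcases le_total 0 b with hb | hb
  · nlinarith [mul_le_mul_of_nonneg_left hmc hb]
  · nlinarith [mul_le_mul_of_nonpos_left hcm hb]

lemma sub_one_mul_mul_rpow_le_of_abs_le {a b c p : ℝ} (ha : 0 ≤ a) (hb : 0 ≤ b)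
    (hp1 : 1 < p) (hp2 : p ≤ 2) (hc : |c| ≤ a * b) :
    (p - 1) * (a ^ 2 + b ^ 2 - 2 * c) * (a + b) ^ (p - 2) ≤
      a ^ (p - 2) * a ^ 2 + b ^ (p - 2) * b ^ 2 - (a ^ (p - 2) + b ^ (p - 2)) * c := by
  have hpow {x : ℝ} (hx : 0 ≤ x) : x ^ (p - 1) = x ^ (p - 2) * x := by
    rw [← rpow_add_one' hx (by linarith)]; ring_nf
  have antiparallel := mul_le_mul_of_nonneg_right
    (sub_one_mul_add_rpow_le_add_rpow ha hb hp1.le hp2) (add_nonneg ha hb)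
  have parallel := sub_one_mul_add_rpow_mul_sq_le_rpow_sub_rpow_mul ha hb hp1.le hp2
  rw [hpow ha, hpow hb, hpow (add_nonneg ha hb)] at antiparallel
  rw [hpow ha, hpow hb] at parallel
  have := add_mul_nonneg_of_abs_le
    (a := a ^ (p - 2) * a ^ 2 + b ^ (p - 2) * b ^ 2 - (p - 1) * (a ^ 2 + b ^ 2) * (a + b) ^ (p - 2))
    (b := 2 * (p - 1) * (a + b) ^ (p - 2) - (a ^ (p - 2) + b ^ (p - 2)))
    (by linear_combination antiparallel) (by linear_combination parallel) hc
  linear_combination this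

section InnerProductSpace

variable {E : Type*} [NormedAddCommGroup E] [InnerProductSpace ℝ E]

lemma inner_smul_sub_smul_sub (x y : ℝ) (u v : E) :
    inner ℝ (x • u - y • v) (u - v) = x * ‖u‖ ^ 2 + y * ‖v‖ ^ 2 - (x + y) * inner ℝ u v := by
  simp only [inner_sub_left, inner_sub_right, real_inner_smul_left, real_inner_self_eq_norm_sq,
    real_inner_comm u v]
  ring

lemma sub_one_mul_norm_sub_sq_mul_rpow_le_inner {p : ℝ} (hp1 : 1 < p) (hp2 : p ≤ 2) (u v : E) :
    (p - 1) * ‖u - v‖ ^ 2 * (‖u‖ + ‖v‖) ^ (p - 2) ≤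
      inner ℝ (‖u‖ ^ (p - 2) • u - ‖v‖ ^ (p - 2) • v) (u - v) := by
  rw [inner_smul_sub_smul_sub, norm_sub_sq_real]
  linear_combination sub_one_mul_mul_rpow_le_of_abs_le (norm_nonneg u) (norm_nonneg v) hp1 hp2
    (abs_real_inner_le_norm u v)

end InnerProductSpace

theorem pLaplacian_monotonicity_p_le_two (p : ℝ) (hp1 : 1 < p) (hp2 : p ≤ 2) :
    ∃ C > (0:ℝ), ∀ (N : ℕ) (t₁ t₂ : EuclideanSpace ℝ (Fin N)), ¬(t₁ = 0 ∧ t₂ = 0) →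
      (inner ℝ ((‖t₁‖ ^ (p - 2)) • t₁ - (‖t₂‖ ^ (p - 2)) • t₂) (t₁ - t₂) : ℝ) ≥
        C * ‖t₁ - t₂‖ ^ (2:ℝ) / (‖t₁‖ + ‖t₂‖) ^ (2 - p) := by
  refine ⟨p - 1, by linarith, fun N t₁ t₂ hne => ?_⟩
  have hpos : 0 < ‖t₁‖ + ‖t₂‖ := by
    rcases not_and_or.mp hne with h | h
    · exact add_pos_of_pos_of_nonneg (norm_pos_iff.mpr h) (norm_nonneg _)
    · exact add_pos_of_nonneg_of_pos (norm_nonneg _) (norm_pos_iff.mpr h)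
  rw [rpow_two, ← neg_sub p 2, rpow_neg hpos.le, div_inv_eq_mul]
  exact sub_one_mul_norm_sub_sq_mul_rpow_le_inner hp1 hp2 t₁ t₂
end

section
/- Let 1 < p < ∞ and let U, V ∈ ℝ satisfy U·V ≤ 0. Define g(t) = |U - tV|^p + |U - V|^{p-2}(U - V)·V·|t|^p for t ∈ ℝ. Then for every t ∈ ℝ, g(t) ≤ g(1) = |U - V|^{p-2}(U - V)·U. -/
open Real

lemma bp_key (p : ℝ) (hp : 1 < p) {a b s : ℝ} (ha : 0 ≤ a) (hb : 0 ≤ b) (hs : 0 ≤ s)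
    (hab : 0 < a + b) :
    (a + s * b) ^ p ≤ (a + b) ^ (p - 1) * (a + b * s ^ p) := by
  have hJ := (convexOn_rpow hp.le).2 (Set.mem_Ici.2 zero_le_one)
    (Set.mem_Ici.2 hs) (div_nonneg ha hab.le) (div_nonneg hb hab.le)
    (by field_simp)
  simp only [smul_eq_mul, mul_one, Real.one_rpow] at hJ
  have h1 : a / (a+b) + b / (a+b) * s = (a + s * b) / (a + b) := by ring
  have h2 : a / (a+b) + b / (a+b) * s ^ p = (a + b * s ^ p) / (a + b) := by ring
  rw [h1, h2, Real.div_rpow (by positivity) hab.le,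
    div_le_div_iff₀ (by positivity) hab] at hJ
  have h3 : (a + b) ^ (p - 1) = (a + b) ^ p / (a + b) := by
    rw [Real.rpow_sub hab, Real.rpow_one]
  rw [h3, div_mul_eq_mul_div, le_div_iff₀ hab]
  linarith [hJ]

lemma bp_case (p : ℝ) (hp : 1 < p) {U V : ℝ} (hU : 0 ≤ U) (hV : V ≤ 0) (t : ℝ) :
    |U - t * V| ^ p + |U - V| ^ (p - 2) * (U - V) * V * |t| ^ p
      ≤ |U - V| ^ (p - 2) * (U - V) * U := by
  rcases eq_or_lt_of_le (show 0 ≤ U - V by linarith) with h0 | hpos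
  · have hU0 : U = 0 := by linarith [h0, hU, hV]
    have hV0 : V = 0 := by linarith
    simp [hU0, hV0, Real.zero_rpow (show p ≠ 0 by linarith)]
  · have habs : |U - V| = U - V := abs_of_pos hpos
    have hA : (U - V) ^ (p - 2) * (U - V) = (U - V) ^ (p - 1) := by
      rw [← Real.rpow_add_one hpos.ne' (p - 2)]
      ring_nf
    have habs2 : |U - t * V| ≤ U + |t| * (-V) := by
      calc |U - t * V| ≤ |U| + |t * V| := abs_sub _ _
        _ = U + |t| * (-V) := by
            rw [abs_of_nonneg hU, abs_mul, abs_of_nonpos hV]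
    have h1 : |U - t * V| ^ p ≤ (U + |t| * (-V)) ^ p :=
      Real.rpow_le_rpow (abs_nonneg _) habs2 (by linarith)
    have h2 : (U + |t| * (-V)) ^ p ≤ (U + -V) ^ (p - 1) * (U + (-V) * |t| ^ p) :=
      bp_key p hp hU (by linarith) (abs_nonneg t) (by linarith)
    have e : U + -V = U - V := by ring
    rw [e] at h2
    rw [habs, hA]
    nlinarith [h1, h2]

lemma bp_g1 (p U V : ℝ) (hp : 1 < p) :
    |U - V| ^ p + |U - V| ^ (p - 2) * (U - V) * V = |U - V| ^ (p - 2) * (U - V) * U := by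
  by_cases h : U - V = 0
  · simp [h, Real.zero_rpow (show p ≠ 0 by linarith)]
  · have pos : 0 < |U - V| := abs_pos.2 h
    have e : |U - V| ^ p = |U - V| ^ (p - 2) * (U - V) ^ 2 := by
      conv_lhs => rw [show p = (p - 2) + 2 by ring]
      rw [Real.rpow_add pos, show ((2:ℝ)) = ((2:ℕ):ℝ) by norm_num,
        Real.rpow_natCast, sq_abs]
    rw [e]; ring

theorem brasco_parini_lemma_B1 (p U V : ℝ) (hp : 1 < p) (hUV : U * V ≤ 0)
    (g : ℝ → ℝ)
    (hg : ∀ t : ℝ, g t = |U - t * V| ^ p + |U - V| ^ (p - 2) * (U - V) * V * |t| ^ p) :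
    (∀ t : ℝ, g t ≤ g 1) ∧ g 1 = |U - V| ^ (p - 2) * (U - V) * U := by
  have hg1 : g 1 = |U - V| ^ (p - 2) * (U - V) * U := by
    rw [hg 1]
    simp only [one_mul, abs_one, Real.one_rpow, mul_one]
    exact bp_g1 p U V hp
  refine ⟨fun t => ?_, hg1⟩
  rw [hg t, hg1]
  rcases mul_nonpos_iff.mp hUV with ⟨hU, hV⟩ | ⟨hU, hV⟩
  · exact bp_case p hp hU hV t
  · have key := bp_case p hp (neg_nonneg.2 hU) (neg_nonpos.2 hV) t
    have e1 : -U - t * -V = -(U - t * V) := by ring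
    have e2 : -U - -V = -(U - V) := by ring
    rw [e1, e2, abs_neg, abs_neg] at key
    nlinarith [key]
end

section
/- Let p ≥ 1 and let u : ℝ^N → ℝ with negative part u⁻ = max(-u, 0). Then for all x, y ∈ ℝ^N, |u(x) - u(y)|^{p-2}(u(x) - u(y))·(u⁻(x) - u⁻(y)) ≤ -|u⁻(x) - u⁻(y)|^p. -/
open Real

lemma neg_part_prod_eq (a b : ℝ) :
    (a - b) * (max (-a) 0 - max (-b) 0) = -(|a - b| * |max (-a) 0 - max (-b) 0|) := by
  rcases le_total a 0 with ha | ha <;> rcases le_total b 0 with hb | hb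
  · rw [max_eq_left (neg_nonneg.mpr ha), max_eq_left (neg_nonneg.mpr hb),
      show -a - -b = -(a - b) by ring, abs_neg, abs_mul_abs_self]
    ring
  · rw [max_eq_left (neg_nonneg.mpr ha), max_eq_right (neg_nonpos.mpr hb),
      sub_zero, abs_of_nonpos (by linarith : a - b ≤ 0),
      abs_of_nonneg (neg_nonneg.mpr ha)]
    ring
  · rw [max_eq_right (neg_nonpos.mpr ha), max_eq_left (neg_nonneg.mpr hb),
      zero_sub, abs_of_nonneg (by linarith : (0:ℝ) ≤ a - b), abs_neg,
      abs_of_nonneg (neg_nonneg.mpr hb)]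
    ring
  · rw [max_eq_right (neg_nonpos.mpr ha), max_eq_right (neg_nonpos.mpr hb)]
    simp

theorem negative_part_test_function_inequality {N : ℕ} (p : ℝ) (hp : 1 ≤ p)
    (u : EuclideanSpace ℝ (Fin N) → ℝ) (x y : EuclideanSpace ℝ (Fin N)) :
    |u x - u y| ^ (p - 2) * (u x - u y) * (max (-(u x)) 0 - max (-(u y)) 0) ≤
      -(|max (-(u x)) 0 - max (-(u y)) 0| ^ p) := by
  set a := u x
  set b := u y
  set c : ℝ := max (-a) 0 - max (-b) 0 with hc
  have hkey : (a - b) * c = -(|a - b| * |c|) := neg_part_prod_eq a b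
  have hcd : |c| ≤ |a - b| := by
    have h := abs_max_sub_max_le_abs (-a) (-b) 0
    rwa [show -a - -b = -(a - b) by ring, abs_neg] at h
  by_cases hc0 : c = 0
  · simp [hc0, Real.zero_rpow (by linarith : p ≠ 0)]
  · have hcpos : 0 < |c| := abs_pos.mpr hc0
    have hdpos : 0 < |a - b| := lt_of_lt_of_le hcpos hcd
    have hLHS : |a - b| ^ (p - 2) * (a - b) * c = -(|a - b| ^ (p - 1) * |c|) := by
      have h2 : |a - b| ^ (p - 1) = |a - b| ^ (p - 2) * |a - b| := by
        rw [← Real.rpow_add_one (ne_of_gt hdpos)]; ring_nf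
      rw [mul_assoc, hkey, h2]; ring
    have hRHS : |c| ^ p = |c| ^ (p - 1) * |c| := by
      rw [← Real.rpow_add_one (ne_of_gt hcpos)]; ring_nf
    rw [hLHS, hRHS, neg_le_neg_iff]
    exact mul_le_mul_of_nonneg_right
      (Real.rpow_le_rpow (abs_nonneg c) hcd (by linarith)) (abs_nonneg c)
end

section
/- Let p > 1 and define h(t) = (1 - t^{1-p})/(1 - t) for t ∈ (0,1). Then h is increasing on (0,1) and h(t) ≤ -(p-1) for all t ∈ (0,1). Moreover, for t ∈ (0, 1/2], h(t) ≤ -((p-1)/2^p)·t^{1-p}/(1-t). -/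
/-!
`h t` is the slope of the secant of the strictly convex function `x ↦ x ^ (1 - p)` between `t`
and `1`, so it increases with `t` and stays below the derivative `1 - p` at `1`. For `t ≤ 1/2`,
`t ^ (1 - p) ≥ 2 ^ (p - 1)` reduces the last bound to Bernoulli's inequality `1 + p ≤ 2 ^ p`.
-/

open Real Set

theorem strictConvexOn_rpow_of_neg {q : ℝ} (hq : q < 0) :
    StrictConvexOn ℝ (Ioi 0) fun x : ℝ => x ^ q := by
  refine strictConvexOn_of_deriv2_pos' (convex_Ioi 0)
    (fun x hx => (continuousAt_rpow_const x q (.inl (ne_of_gt hx))).continuousWithinAt)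
    fun x hx => ?_
  rw [iter_deriv_rpow_const]
  have hq' : 0 < q * (q - 1) := mul_pos_of_neg_of_neg hq (by linarith)
  simpa [descPochhammer_succ_right, mul_comm] using
    mul_pos hq' (rpow_pos_of_pos (mem_Ioi.1 hx) (q - 2))

theorem one_sub_rpow_div_one_sub_eq_slope (q t : ℝ) :
    (1 - t ^ q) / (1 - t) = slope (fun x : ℝ => x ^ q) 1 t := by
  rw [slope_def_field, one_rpow, ← neg_div_neg_eq, neg_sub, neg_sub]

theorem strictMonoOn_one_sub_rpow_div_one_sub {q : ℝ} (hq : q < 0) :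
    StrictMonoOn (fun t : ℝ => (1 - t ^ q) / (1 - t)) (Ioo 0 1) := by
  intro s hs t ht hst
  simp only [one_sub_rpow_div_one_sub_eq_slope, slope_def_field]
  exact (strictConvexOn_rpow_of_neg hq).secant_strict_mono (mem_Ioi.2 one_pos) hs.1 ht.1
    hs.2.ne ht.2.ne hst

theorem one_sub_rpow_div_one_sub_lt {q t : ℝ} (hq : q < 0) (ht₀ : 0 < t) (ht₁ : t < 1) :
    (1 - t ^ q) / (1 - t) < q := by
  have hderiv : HasDerivAt (fun x : ℝ => x ^ q) q 1 := by
    simpa using hasDerivAt_rpow_const (x := 1) (p := q) (.inl one_ne_zero)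
  rw [one_sub_rpow_div_one_sub_eq_slope, slope_comm]
  exact (strictConvexOn_rpow_of_neg hq).slope_lt_of_hasDerivAt ht₀ (mem_Ioi.2 one_pos) ht₁
    hderiv

theorem one_sub_rpow_le_of_le_half {p t : ℝ} (hp : 1 ≤ p) (ht₀ : 0 < t) (ht : t ≤ 1 / 2) :
    1 - t ^ (1 - p) ≤ -((p - 1) / 2 ^ p) * t ^ (1 - p) := by
  have hbernoulli : 1 + p ≤ (2 : ℝ) ^ p := by
    simpa [one_add_one_eq_two, add_comm] using
      one_add_mul_self_le_rpow_one_add (s := 1) (by norm_num) hp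
  have hhalf : (2 : ℝ) ^ p / 2 ≤ t ^ (1 - p) := by
    calc (2 : ℝ) ^ p / 2 = (1 / 2) ^ (1 - p) := by
          rw [div_rpow zero_le_one zero_le_two, one_rpow, rpow_sub two_pos, rpow_one,
            one_div_div]
      _ ≤ t ^ (1 - p) := rpow_le_rpow_of_nonpos ht₀ ht (by linarith)
  have h2p : (0 : ℝ) < 2 ^ p := by positivity
  have hc : 0 ≤ 1 - (p - 1) / 2 ^ p := by
    rw [sub_nonneg, div_le_one h2p]; linarith
  have key : 1 ≤ (1 - (p - 1) / 2 ^ p) * t ^ (1 - p) :=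
    calc (1 : ℝ) ≤ (1 - (p - 1) / 2 ^ p) * (2 ^ p / 2) := by
          rw [sub_mul, div_mul_div_cancel₀ h2p.ne']; linarith
      _ ≤ _ := mul_le_mul_of_nonneg_left hhalf hc
  linarith

theorem log_estimate_auxiliary_function (p : ℝ) (hp : 1 < p) (h : ℝ → ℝ)
    (hh : ∀ t ∈ Set.Ioo (0:ℝ) 1, h t = (1 - t ^ (1 - p)) / (1 - t)) :
    StrictMonoOn h (Set.Ioo 0 1) ∧
      (∀ t ∈ Set.Ioo (0:ℝ) 1, h t ≤ -(p - 1)) ∧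
      (∀ t ∈ Set.Ioc (0:ℝ) (1/2), h t ≤ -((p - 1) / 2 ^ p) * t ^ (1 - p) / (1 - t)) := by
  have hq : 1 - p < 0 := by linarith
  refine ⟨?_, fun t ht => ?_, fun t ⟨ht₀, ht⟩ => ?_⟩
  · exact (strictMonoOn_one_sub_rpow_div_one_sub hq).congr fun t ht => (hh t ht).symm
  · rw [hh t ht, neg_sub p 1]
    exact (one_sub_rpow_div_one_sub_lt hq ht.1 ht.2).le
  · have ht₁ : t < 1 := by linarith
    rw [hh t ⟨ht₀, ht₁⟩]
    exact div_le_div_of_nonneg_right (one_sub_rpow_le_of_le_half hp.le ht₀ ht) (by linarith)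
end

section
/- Let p > 1 and let A, B ∈ ℝ with A·B ≤ 0. Then for all ω₁, ω₂ ∈ ℝ, |ω₁ A - ω₁ B|^{p-2}(ω₁ A - ω₁ B)·ω₁ A - |ω₂ A - ω₂ B|^{p-2}(ω₂ A - ω₂ B)·ω₂ B ≥ |ω₁ A - ω₂ B|^p. -/
/-!
After the sign change `(A, B, ω₁, ω₂) ↦ (-A, -B, -ω₁, -ω₂)`, which leaves every term unchanged,
we may take `a = A ≥ 0` and `b = -B ≥ 0`. Both terms on the left then factor as
`|ω|ᵖ (a + b)ᵖ⁻¹` times `a` resp. `b`, and the inequality becomes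
`|ω₁ a + ω₂ b|ᵖ ≤ (a + b)ᵖ⁻¹ (a |ω₁|ᵖ + b |ω₂|ᵖ)`, which is Jensen's inequality for the convex
function `t ↦ tᵖ` with weights `a / (a + b)` and `b / (a + b)`, after the triangle inequality.
-/

open Real

lemma abs_rpow_sub_two_mul_self_mul_self {p : ℝ} (hp : p ≠ 0) (t : ℝ) :
    |t| ^ (p - 2) * t * t = |t| ^ p := by
  rcases eq_or_ne t 0 with rfl | ht
  · simp [zero_rpow hp]
  have ht' : 0 < |t| := abs_pos.mpr ht
  calc |t| ^ (p - 2) * t * t = |t| ^ (p - 2) * |t| ^ (2 : ℝ) := by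
        rw [rpow_two, sq_abs]; ring
    _ = |t| ^ p := by rw [← rpow_add ht', sub_add_cancel]

lemma abs_mul_rpow_sub_two_mul_mul {p c : ℝ} (hp₀ : p ≠ 0) (hp₁ : p ≠ 1) (hc : 0 ≤ c)
    (w s : ℝ) : |w * c| ^ (p - 2) * (w * c) * (w * s) = |w| ^ p * c ^ (p - 1) * s := by
  rcases hc.eq_or_lt with rfl | hc
  · simp [zero_rpow (sub_ne_zero.mpr hp₁)]
  calc |w * c| ^ (p - 2) * (w * c) * (w * s) = |w * c| ^ (p - 2) * (w * c) * (w * c) * s / c := by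
        field_simp
    _ = |w| ^ p * c ^ (p - 1) * s := by
        rw [abs_rpow_sub_two_mul_self_mul_self hp₀, abs_mul, abs_of_pos hc,
          mul_rpow (abs_nonneg w) hc.le, rpow_sub_one hc.ne']
        ring

lemma mul_add_mul_rpow_le {p a b x y : ℝ} (hp : 1 ≤ p) (ha : 0 ≤ a) (hb : 0 ≤ b) (hx : 0 ≤ x)
    (hy : 0 ≤ y) : (a * x + b * y) ^ p ≤ (a + b) ^ (p - 1) * (a * x ^ p + b * y ^ p) := by
  have hp₀ : p ≠ 0 := by positivity
  rcases (add_nonneg ha hb).eq_or_lt with hab | hab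
  · obtain ⟨rfl, rfl⟩ : a = 0 ∧ b = 0 := ⟨by linarith, by linarith⟩
    simp [zero_rpow hp₀]
  have jensen : (a / (a + b) * x + b / (a + b) * y) ^ p ≤
      a / (a + b) * x ^ p + b / (a + b) * y ^ p :=
    (convexOn_rpow hp).2 hx hy (by positivity) (by positivity) (by field_simp)
  calc (a * x + b * y) ^ p = (a + b) ^ p * (a / (a + b) * x + b / (a + b) * y) ^ p := by
        rw [← mul_rpow hab.le (by positivity)]
        field_simp
    _ ≤ (a + b) ^ p * (a / (a + b) * x ^ p + b / (a + b) * y ^ p) := by gcongr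
    _ = (a + b) ^ (p - 1) * (a * x ^ p + b * y ^ p) := by
        rw [rpow_sub_one hab.ne']
        field_simp

lemma abs_mul_add_mul_rpow_le {p a b : ℝ} (hp : 1 < p) (ha : 0 ≤ a) (hb : 0 ≤ b) (x y : ℝ) :
    |x * a + y * b| ^ p ≤ |x * (a + b)| ^ (p - 2) * (x * (a + b)) * (x * a) +
      |y * (a + b)| ^ (p - 2) * (y * (a + b)) * (y * b) := by
  have hab : 0 ≤ a + b := add_nonneg ha hb
  rw [abs_mul_rpow_sub_two_mul_mul (by positivity) hp.ne' hab,
    abs_mul_rpow_sub_two_mul_mul (by positivity) hp.ne' hab]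
  have triangle : |x * a + y * b| ≤ a * |x| + b * |y| := by
    calc |x * a + y * b| ≤ |x * a| + |y * b| := abs_add_le _ _
      _ = a * |x| + b * |y| := by rw [abs_mul, abs_mul, abs_of_nonneg ha, abs_of_nonneg hb]; ring
  calc |x * a + y * b| ^ p ≤ (a * |x| + b * |y|) ^ p :=
        rpow_le_rpow (abs_nonneg _) triangle (by positivity)
    _ ≤ (a + b) ^ (p - 1) * (a * |x| ^ p + b * |y| ^ p) :=
        mul_add_mul_rpow_le hp.le ha hb (abs_nonneg x) (abs_nonneg y)
    _ = _ := by ring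

theorem brasco_parini_pointwise_inequality (p A B : ℝ) (hp : 1 < p) (hAB : A * B ≤ 0)
    (ω₁ ω₂ : ℝ) :
    |ω₁ * A - ω₁ * B| ^ (p - 2) * (ω₁ * A - ω₁ * B) * (ω₁ * A) -
        |ω₂ * A - ω₂ * B| ^ (p - 2) * (ω₂ * A - ω₂ * B) * (ω₂ * B) ≥
      |ω₁ * A - ω₂ * B| ^ p := by
  obtain ⟨a, b, x, y, ha, hb, hx, hy, hxa, hyb⟩ : ∃ a b x y : ℝ, 0 ≤ a ∧ 0 ≤ b ∧
      x * (a + b) = ω₁ * A - ω₁ * B ∧ y * (a + b) = ω₂ * A - ω₂ * B ∧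
      x * a = ω₁ * A ∧ y * b = -(ω₂ * B) := by
    rcases mul_nonpos_iff.mp hAB with ⟨hA, hB⟩ | ⟨hA, hB⟩
    · exact ⟨A, -B, ω₁, ω₂, hA, neg_nonneg.mpr hB, by ring, by ring, rfl, by ring⟩
    · exact ⟨-A, B, -ω₁, -ω₂, neg_nonneg.mpr hA, hB, by ring, by ring, by ring, by ring⟩
  have hsum : x * a + y * b = ω₁ * A - ω₂ * B := by rw [hxa, hyb]; ring
  have key := abs_mul_add_mul_rpow_le hp ha hb x y
  rw [hsum, hx, hy, hxa, hyb] at key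
  linarith
end

section
/- Let p > 1 and let u, v : Ω → ℝ be positive measurable functions with weak gradients ∇u, ∇v. For t ∈ (0,1) define σ_t = (t u^p + (1-t) v^p)^{1/p}. Then pointwise, |∇σ_t|^p ≤ t|∇u|^p + (1-t)|∇v|^p. -/
/-!
With `S = t u^p + (1-t) v^p` we have `σ_t^(1-p) = S^(-(1 - 1/p))`. After the triangle inequality,
the weighted Hölder inequality for the weights `t u^p`, `(1-t) v^p` and the values `|∇u|/u`,
`|∇v|/v` bounds `t u^(p-1) |∇u| + (1-t) v^(p-1) |∇v|` by `S^(1 - 1/p) (t|∇u|^p + (1-t)|∇v|^p)^(1/p)`,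
so the powers of `S` cancel and `|∇σ_t| ≤ (t|∇u|^p + (1-t)|∇v|^p)^(1/p)`.
-/

open Real

theorem inner_le_weight_mul_Lp_two {p : ℝ} (hp : 1 ≤ p) {w₁ w₂ f₁ f₂ : ℝ} (hw₁ : 0 ≤ w₁)
    (hw₂ : 0 ≤ w₂) (hf₁ : 0 ≤ f₁) (hf₂ : 0 ≤ f₂) :
    w₁ * f₁ + w₂ * f₂ ≤ (w₁ + w₂) ^ (1 - p⁻¹) * (w₁ * f₁ ^ p + w₂ * f₂ ^ p) ^ p⁻¹ := by
  simpa [Fin.sum_univ_two] using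
    inner_le_weight_mul_Lp_of_nonneg Finset.univ hp ![w₁, w₂] ![f₁, f₂]
      (by simp [Fin.forall_fin_two, hw₁, hw₂]) (by simp [Fin.forall_fin_two, hf₁, hf₂])

theorem mul_rpow_sub_one_mul_add_le {p t s u v a b : ℝ} (hp : 1 ≤ p) (ht : 0 ≤ t) (hs : 0 ≤ s)
    (hu : 0 < u) (hv : 0 < v) (ha : 0 ≤ a) (hb : 0 ≤ b) :
    t * u ^ (p - 1) * a + s * v ^ (p - 1) * b ≤
      (t * u ^ p + s * v ^ p) ^ (1 - p⁻¹) * (t * a ^ p + s * b ^ p) ^ p⁻¹ := by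
  have hweight {x c : ℝ} (hx : 0 < x) (hc : 0 ≤ c) :
      x ^ p * (c / x) = x ^ (p - 1) * c ∧ x ^ p * (c / x) ^ p = c ^ p := by
    refine ⟨by rw [rpow_sub_one hx.ne']; ring, ?_⟩
    rw [← mul_rpow hx.le (by positivity), mul_div_cancel₀ _ hx.ne']
  have := inner_le_weight_mul_Lp_two hp (by positivity : 0 ≤ t * u ^ p)
    (by positivity : 0 ≤ s * v ^ p) (div_nonneg ha hu.le) (div_nonneg hb hv.le)
  simp only [mul_assoc, (hweight hu ha).1, (hweight hv hb).1, (hweight hu ha).2,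
    (hweight hv hb).2] at this
  simpa only [mul_assoc] using this

theorem norm_rpow_smul_add_smul_le {E : Type*} [SeminormedAddCommGroup E] [NormedSpace ℝ E]
    {p t s u v : ℝ} (hp : 1 ≤ p) (ht : 0 < t) (hs : 0 ≤ s) (hu : 0 < u) (hv : 0 < v) (x y : E) :
    ‖((t * u ^ p + s * v ^ p) ^ (1 / p)) ^ (1 - p) •
        ((t * u ^ (p - 1)) • x + (s * v ^ (p - 1)) • y)‖ ≤
      (t * ‖x‖ ^ p + s * ‖y‖ ^ p) ^ p⁻¹ := by
  set S := t * u ^ p + s * v ^ p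
  have hS : 0 < S := by positivity
  have hcancel : (S ^ (1 / p)) ^ (1 - p) * S ^ (1 - p⁻¹) = 1 := by
    rw [← rpow_mul hS.le, ← rpow_add hS]
    convert rpow_zero S using 2
    field_simp
    ring
  calc _ ≤ (S ^ (1 / p)) ^ (1 - p) * (t * u ^ (p - 1) * ‖x‖ + s * v ^ (p - 1) * ‖y‖) := by
        rw [norm_smul, norm_of_nonneg (by positivity)]
        gcongr
        refine (norm_add_le _ _).trans_eq ?_
        rw [norm_smul, norm_smul, norm_of_nonneg (by positivity), norm_of_nonneg (by positivity)]
    _ ≤ (S ^ (1 / p)) ^ (1 - p) * (S ^ (1 - p⁻¹) * (t * ‖x‖ ^ p + s * ‖y‖ ^ p) ^ p⁻¹) := by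
        gcongr
        exact mul_rpow_sub_one_mul_add_le hp ht.le hs hu hv (norm_nonneg x) (norm_nonneg y)
    _ = _ := by rw [← mul_assoc, hcancel, one_mul]

theorem gradient_convexity_pointwise_estimate {N : ℕ} (p t u v : ℝ) (hp : 1 < p)
    (ht : t ∈ Set.Ioo (0:ℝ) 1) (hu : 0 < u) (hv : 0 < v)
    (gu gv : EuclideanSpace ℝ (Fin N)) :
    ‖((((t * u ^ p + (1 - t) * v ^ p) ^ (1/p)) ^ (1 - p)) •
        ((t * u ^ (p - 1)) • gu + ((1 - t) * v ^ (p - 1)) • gv))‖ ^ p ≤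
      t * ‖gu‖ ^ p + (1 - t) * ‖gv‖ ^ p := by
  obtain ⟨ht₀, ht₁⟩ := ht
  have hp₀ : 0 < p := by linarith
  calc _ ≤ ((t * ‖gu‖ ^ p + (1 - t) * ‖gv‖ ^ p) ^ p⁻¹) ^ p := by
        gcongr
        exact norm_rpow_smul_add_smul_le hp.le ht₀ (by linarith) hu hv gu gv
    _ = _ := rpow_inv_rpow (by positivity) hp₀.ne'
end
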